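/- Let (M, L, R, ε) be a G-span from (S, H) to (T, V), and let (id_S, e)_* and (id_T, e)_* be the identity G-spans on (S,H) and (T,V) (apex S resp. T, both legs the identity, ε constant equal to the identity element e of G). Then the matrices satisfy [(id_S,e)_*]·[M,ε] = [M,ε] = [M,ε]·[(id_T,e)_*]. -/

import Mathlib

open CategoryTheory

noncomputable section

/-- The component set `π₀(C)`: isomorphism classes of objects of `C`. -/
abbrev Pi0 (C : Type*) [Category C] := Quotient (isIsomorphicSetoid C)

/-- Groupoid cardinality (Euler characteristic): the sum, over a set of representatives of
the isomorphism classes of objects, of the reciprocals of the orders of the automorphism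
groups. -/
noncomputable def gcard (C : Type*) [Category C] : ℚ :=
  ∑ᶠ x : Pi0 C, (Nat.card (Aut (Quotient.out x)) : ℚ)⁻¹

/-- A functor into the one-object groupoid `BG`, identified with an assignment of elements
of `G` to morphisms (composition goes to multiplication in reverse order, matching the
convention `f ≫ g ↦ g·f` of `BG`). -/
structure GFunctor (S : Type*) [Category S] (G : Type*) [Group G] where
  map : ∀ {a b : S}, (a ⟶ b) → G
  map_id : ∀ a : S, map (𝟙 a) = 1
  map_comp : ∀ {a b c : S} (f : a ⟶ b) (g : b ⟶ c), map (f ≫ g) = map g * map f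

/-- The two-sided homotopy fibre `c\M/d` of a span `S ⟵L M ⟶R T`: objects are triples
`(s, a, t)` with `s : c ⟶ L a` and `t : R a ⟶ d`; morphisms are morphisms `m : a₁ ⟶ a₂`
of `M` with `L m ∘ s₁ = s₂` and `t₂ ∘ R m = t₁`. -/
abbrev TwoFibre {S T M : Type*} [Category S] [Category T] [Category M]
    (L : M ⥤ S) (R : M ⥤ T) (c : S) (d : T) :=
  StructuredArrow c (CostructuredArrow.proj R d ⋙ L)

/-- The induced function `c\ε/d` on the two-sided homotopy fibre:
`(s,a,t) ↦ V(t)·ε(a)·H(s)`. -/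
def twoEps {S T M : Type*} [Category S] [Category T] [Category M]
    {G : Type*} [Group G] (H : GFunctor S G) (V : GFunctor T G)
    (L : M ⥤ S) (R : M ⥤ T) (ε : M → G) {c : S} {d : T}
    (x : TwoFibre L R c d) : G :=
  V.map x.right.hom * ε x.right.left * H.map x.hom

/-- The matrix `[M, ε] : π₀(S) × π₀(T) → ℚG` of a `G`-span:
`[M,ε](c,d) = |Aut_T(d)|⁻¹ · ∑_{g ∈ G} χ((c\M/d){c\ε/d = g}) · g`. -/
noncomputable def spanMatrix {S T M : Type*} [Category S] [Category T] [Category M]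
    {G : Type*} [CommGroup G] [Fintype G]
    (H : GFunctor S G) (V : GFunctor T G)
    (L : M ⥤ S) (R : M ⥤ T) (ε : M → G)
    (c : Pi0 S) (d : Pi0 T) : MonoidAlgebra ℚ G :=
  ∑ g : G, MonoidAlgebra.single g
    ((Nat.card (Aut (Quotient.out d)) : ℚ)⁻¹ *
      gcard (ObjectProperty.FullSubcategory
        (fun x : TwoFibre L R (Quotient.out c) (Quotient.out d) =>
          twoEps H V L R ε x = g)))

/-!
The matrix of an identity span is diagonal, and its diagonal entry at `c` is the average
`|Aut c|⁻¹ · ∑_{f : c ⟶ c} H(f)`: the fibre `c\S/x` of the identity span is equivalent to the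
discrete set `c ⟶ x` via `(s, a, t) ↦ t ∘ s`. Precomposing with an automorphism `f` of `c` is an
automorphism of `c\M/d` carrying `{c\ε/d = g}` onto `{c\ε/d = g · H(f)}`, so these two groupoids
have the same cardinality and `[M,ε](c,d) · H(f) = [M,ε](c,d)`. Hence `[M,ε](c,d)` is fixed by
the averaging element; on the other side one postcomposes with automorphisms of `d` instead.
-/

lemma finsum_one_eq_natCard (α : Type*) : ∑ᶠ _ : α, (1 : ℚ) = Nat.card α := by
  rcases finite_or_infinite α with hα | hα
  · have := Fintype.ofFinite α
    simp [finsum_eq_sum_of_fintype]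
  · rw [Nat.card_eq_zero_of_infinite, Nat.cast_zero]
    exact finsum_of_infinite_support <| by
      rw [Function.support_const one_ne_zero]
      exact Set.infinite_univ

lemma CategoryTheory.Functor.FullyFaithful.natCard_aut_obj {C D : Type*} [Category C]
    [Category D] {F : C ⥤ D} (hF : F.FullyFaithful) (X : C) :
    Nat.card (Aut (F.obj X)) = Nat.card (Aut X) :=
  (Nat.card_congr hF.isoEquiv).symm

section GroupoidCardinality

variable {C D : Type*} [Category C] [Category D]

lemma gcard_congr (e : C ≌ D) : gcard C = gcard D := by
  let f := ((skeletonEquivalence C).trans e).trans (skeletonEquivalence D).symm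
  have hAut (x : Pi0 C) : Nat.card (Aut (e.skeletonEquiv x).out) = Nat.card (Aut x.out) :=
    ((Functor.FullyFaithful.ofFullyFaithful (fromSkeleton D)).natCard_aut_obj _).trans <|
      (f.fullyFaithfulFunctor.natCard_aut_obj x).trans
        ((Functor.FullyFaithful.ofFullyFaithful (fromSkeleton C)).natCard_aut_obj x).symm
  calc gcard C = ∑ᶠ x : Pi0 C, (Nat.card (Aut (e.skeletonEquiv x).out) : ℚ)⁻¹ :=
        finsum_congr fun x => by rw [hAut]
    _ = gcard D :=
        finsum_comp_equiv e.skeletonEquiv (f := fun y : Pi0 D => (Nat.card (Aut y.out) : ℚ)⁻¹)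

lemma gcard_fullSubcategory_eq {P : ObjectProperty C} {Q : ObjectProperty D} (F : C ⥤ D)
    [F.Full] [F.Faithful] (hPQ : ∀ X, P X → Q (F.obj X))
    (hQP : ∀ Y, Q Y → ∃ X, P X ∧ Nonempty (F.obj X ≅ Y)) :
    gcard P.FullSubcategory = gcard Q.FullSubcategory := by
  let F' := Q.lift (P.ι ⋙ F) fun X => hPQ _ X.2
  have : F'.EssSurj := ⟨fun Y => by
    obtain ⟨X, hX, ⟨i⟩⟩ := hQP Y.obj Y.2
    exact ⟨⟨X, hX⟩, ⟨Q.isoMk i⟩⟩⟩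
  have : F'.IsEquivalence := {}
  exact gcard_congr F'.asEquivalence

lemma gcard_fullSubcategory_eq_of_equivalence {P : ObjectProperty C} {Q : ObjectProperty D}
    (e : C ≌ D) (hPQ : ∀ X, P X → Q (e.functor.obj X))
    (hQP : ∀ Y, Q Y → P (e.inverse.obj Y)) :
    gcard P.FullSubcategory = gcard Q.FullSubcategory :=
  gcard_fullSubcategory_eq e.functor hPQ fun Y hY => ⟨_, hQP Y hY, ⟨e.counitIso.app Y⟩⟩

lemma gcard_fullSubcategory_discrete {α : Type*} (p : α → Prop) :
    gcard (ObjectProperty.FullSubcategory fun a : Discrete α => p a.as) = Nat.card {a // p a} := by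
  let e : Pi0 (ObjectProperty.FullSubcategory fun a : Discrete α => p a.as) ≃ {a // p a} :=
    { toFun := Quotient.lift (fun X => ⟨X.obj.as, X.2⟩)
        fun _ _ ⟨i⟩ => Subtype.ext (Discrete.eq_of_hom i.hom.hom)
      invFun a := ⟦⟨⟨a.1⟩, a.2⟩⟧
      left_inv := by rintro ⟨X⟩; rfl
      right_inv _ := rfl }
  have hAut (X : ObjectProperty.FullSubcategory fun a : Discrete α => p a.as) :
      Nat.card (Aut X) = 1 :=
    Nat.card_eq_one_iff_unique.mpr
      ⟨⟨fun _ _ => Iso.ext (ObjectProperty.hom_ext _ (Subsingleton.elim _ _))⟩, ⟨Iso.refl X⟩⟩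
  simp only [gcard, hAut, Nat.cast_one, inv_one]
  rw [finsum_one_eq_natCard, Nat.card_congr e]

end GroupoidCardinality

namespace GFunctor

variable {S : Type*} [Category S] {G : Type*} [Group G] (H : GFunctor S G)

lemma map_inv_mul_map_hom {a b : S} (i : a ≅ b) : H.map i.inv * H.map i.hom = 1 := by
  rw [← H.map_comp, i.hom_inv_id, H.map_id]

end GFunctor

section TwoFibre

variable {S T M : Type*} [Category S] [Category T] [Category M] (L : M ⥤ S) (R : M ⥤ T)
  {c c' : S} {d d' : T}

def twoFibreMapRight (f : d ⟶ d') : TwoFibre L R c d ⥤ TwoFibre L R c d' where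
  obj x := StructuredArrow.mk (Y := (CostructuredArrow.map f).obj x.right) x.hom
  map m := StructuredArrow.homMk ((CostructuredArrow.map f).map m.right) (StructuredArrow.w m)

variable {L R} in
@[simp]
lemma twoFibreMapRight_obj_right_left (f : d ⟶ d') (x : TwoFibre L R c d) :
    ((twoFibreMapRight L R f).obj x).right.left = x.right.left :=
  rfl

variable {L R} in
@[simp]
lemma twoFibreMapRight_obj_right_hom (f : d ⟶ d') (x : TwoFibre L R c d) :
    ((twoFibreMapRight L R f).obj x).right.hom = x.right.hom ≫ f :=
  rfl

def twoFibreMapRightCompIso {d₁ d₂ : T} (f : d₁ ⟶ d₂) (g : d₂ ⟶ d₁) (h : f ≫ g = 𝟙 d₁) :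
    𝟭 (TwoFibre L R c d₁) ≅ twoFibreMapRight L R f ⋙ twoFibreMapRight L R g :=
  NatIso.ofComponents
    (fun x => StructuredArrow.isoMk (CostructuredArrow.isoMk (Iso.refl _) (by simp [h]))
      ((congrArg _ (L.map_id _)).trans (Category.comp_id _)))
    (fun _ => StructuredArrow.hom_ext _ _ (CostructuredArrow.hom_ext _ _
      ((Category.comp_id _).trans (Category.id_comp _).symm)))

def twoFibreMapRightIso (i : d ≅ d') : TwoFibre L R c d ≌ TwoFibre L R c d' :=
  CategoryTheory.Equivalence.mk (twoFibreMapRight L R i.hom) (twoFibreMapRight L R i.inv)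
    (twoFibreMapRightCompIso L R _ _ i.hom_inv_id)
    (twoFibreMapRightCompIso L R _ _ i.inv_hom_id).symm

variable {G : Type*} [Group G] (H : GFunctor S G) (V : GFunctor T G) (ε : M → G)

/-- The groupoid `(c\M/d){c\ε/d = g}` entering the matrix entry `[M,ε](c,d)`. -/
abbrev twoEpsFibre (c : S) (d : T) (g : G) : Type _ :=
  ObjectProperty.FullSubcategory fun x : TwoFibre L R c d => twoEps H V L R ε x = g

lemma twoEps_mapIso_functor_obj (i : c ≅ c') (x : TwoFibre L R c d) :
    twoEps H V L R ε ((StructuredArrow.mapIso i).functor.obj x) =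
      twoEps H V L R ε x * H.map i.inv := by
  simp [twoEps, H.map_comp, mul_assoc]

lemma twoEps_mapIso_inverse_obj (i : c ≅ c') (x : TwoFibre L R c' d) :
    twoEps H V L R ε ((StructuredArrow.mapIso i).inverse.obj x) =
      twoEps H V L R ε x * H.map i.hom := by
  simp [twoEps, H.map_comp, mul_assoc]

lemma twoEps_twoFibreMapRight_obj (f : d ⟶ d') (x : TwoFibre L R c d) :
    twoEps H V L R ε ((twoFibreMapRight L R f).obj x) = V.map f * twoEps H V L R ε x := by
  change V.map (x.right.hom ≫ f) * ε x.right.left * H.map x.hom = _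
  rw [V.map_comp, twoEps]
  simp only [mul_assoc]

lemma gcard_twoEpsFibre_eq_mul_right (i : c ≅ c') (g : G) :
    gcard (twoEpsFibre L R H V ε c d g) = gcard (twoEpsFibre L R H V ε c' d (g * H.map i.inv)) :=
  gcard_fullSubcategory_eq_of_equivalence (StructuredArrow.mapIso i)
    (fun x hx => by rw [twoEps_mapIso_functor_obj, hx])
    (fun y hy => by
      rw [twoEps_mapIso_inverse_obj, hy, mul_assoc, H.map_inv_mul_map_hom, mul_one])

lemma gcard_twoEpsFibre_eq_mul_left (i : d ≅ d') (g : G) :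
    gcard (twoEpsFibre L R H V ε c d g) = gcard (twoEpsFibre L R H V ε c d' (V.map i.hom * g)) :=
  gcard_fullSubcategory_eq_of_equivalence (twoFibreMapRightIso L R i)
    (fun x hx => (twoEps_twoFibreMapRight_obj L R H V ε i.hom x).trans (by rw [hx]))
    (fun y hy => (twoEps_twoFibreMapRight_obj L R H V ε i.inv y).trans (by
      rw [hy, ← mul_assoc, V.map_inv_mul_map_hom, one_mul]))

end TwoFibre

section IdentitySpan

variable {S : Type*} [Groupoid S] (c x : S)

def twoFibreIdComp : TwoFibre (𝟭 S) (𝟭 S) c x ⥤ Discrete (c ⟶ x) where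
  obj y := ⟨y.hom ≫ y.right.hom⟩
  map {y z} m := eqToHom <| congrArg Discrete.mk <| by
    rw [← StructuredArrow.w m, ← CostructuredArrow.w m.right]
    exact (Category.assoc _ _ _).symm

instance : (twoFibreIdComp c x).Faithful :=
  ⟨fun {y _} m₁ m₂ _ => StructuredArrow.hom_ext _ _ <| CostructuredArrow.hom_ext _ _ <|
    (cancel_epi y.hom).mp ((StructuredArrow.w m₁).trans (StructuredArrow.w m₂).symm)⟩

instance : (twoFibreIdComp c x).Full where
  map_surjective {y z} k := by
    have hk : y.hom ≫ y.right.hom = z.hom ≫ z.right.hom :=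
      Discrete.eq_of_hom (X := (twoFibreIdComp c x).obj y) (Y := (twoFibreIdComp c x).obj z) k
    refine ⟨StructuredArrow.homMk (CostructuredArrow.homMk (Groupoid.inv y.hom ≫ z.hom) ?_) ?_,
      Subsingleton.elim _ _⟩
    · change (Groupoid.inv y.hom ≫ z.hom) ≫ z.right.hom = y.right.hom
      erw [Category.assoc, ← hk, ← Category.assoc, Groupoid.inv_comp, Category.id_comp]
    · change y.hom ≫ Groupoid.inv y.hom ≫ z.hom = z.hom
      rw [← Category.assoc, Groupoid.comp_inv, Category.id_comp]

variable {G : Type*} [Group G] (H : GFunctor S G)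

lemma twoEps_id (y : TwoFibre (𝟭 S) (𝟭 S) c x) :
    twoEps H H (𝟭 S) (𝟭 S) (fun _ => 1) y = H.map (y.hom ≫ y.right.hom) := by
  rw [twoEps, mul_one]
  exact (H.map_comp _ _).symm

lemma gcard_twoEpsFibre_id (g : G) :
    gcard (twoEpsFibre (𝟭 S) (𝟭 S) H H (fun _ => 1) c x g) =
      Nat.card {f : c ⟶ x // H.map f = g} := by
  refine (gcard_fullSubcategory_eq (twoFibreIdComp c x) (Q := fun f => H.map f.as = g) ?_ ?_).trans
    (gcard_fullSubcategory_discrete fun f => H.map f = g)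
  · exact fun y hy => (twoEps_id c x H y).symm.trans hy
  · refine fun f hf => ⟨StructuredArrow.mk (Y := CostructuredArrow.mk f.as) (𝟙 c), ?_, ?_⟩
    · exact (twoEps_id c x H _).trans ((congrArg H.map (Category.id_comp f.as)).trans hf)
    · exact ⟨eqToIso (congrArg Discrete.mk (Category.id_comp f.as))⟩

end IdentitySpan

namespace MonoidAlgebra

variable {k G ι : Type*} [Fintype G]

lemma sum_single_natCard_fiber [Semiring k] [Fintype ι] (ν : ι → G) :
    ∑ g, single g (Nat.card {i // ν i = g} : k) = ∑ i, single (ν i) (1 : k) := by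
  classical
  rw [← Finset.sum_fiberwise Finset.univ ν]
  refine Finset.sum_congr rfl fun g _ => ?_
  rw [Finset.sum_congr rfl fun i hi => by rw [(Finset.mem_filter.mp hi).2], Finset.sum_const,
    Nat.card_eq_fintype_card, Fintype.card_subtype, smul_single, nsmul_eq_mul, mul_one]

lemma mul_sum_single_inv_natCard_fiber [Field k] [CharZero k] [Monoid G] [Finite ι] [Nonempty ι]
    (ν : ι → G) (P : MonoidAlgebra k G) (hP : ∀ i, P * single (ν i) 1 = P) :
    P * ∑ g, single g ((Nat.card ι : k)⁻¹ * Nat.card {i // ν i = g}) = P := by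
  have := Fintype.ofFinite ι
  calc P * ∑ g, single g ((Nat.card ι : k)⁻¹ * Nat.card {i // ν i = g})
      = (Nat.card ι : k)⁻¹ • ∑ i, P * single (ν i) 1 := by
        simp_rw [← smul_single', ← Finset.smul_sum, mul_smul_comm, sum_single_natCard_fiber,
          Finset.mul_sum]
    _ = P := by
        rw [Finset.sum_congr rfl fun i _ => hP i, Finset.sum_const, Finset.card_univ,
          ← Nat.card_eq_fintype_card, ← Nat.cast_smul_eq_nsmul k, smul_smul,
          inv_mul_cancel₀ (Nat.cast_ne_zero.mpr Nat.card_pos.ne'), one_smul]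

end MonoidAlgebra

lemma spanMatrix_mul_single_of_gcard {S T M : Type*} [Category S] [Category T] [Category M]
    {G : Type*} [CommGroup G] [Fintype G] (H : GFunctor S G) (V : GFunctor T G)
    (L : M ⥤ S) (R : M ⥤ T) (ε : M → G) (c : Pi0 S) (d : Pi0 T) (h : G)
    (hfib : ∀ g, gcard (twoEpsFibre L R H V ε c.out d.out g) =
      gcard (twoEpsFibre L R H V ε c.out d.out (g * h))) :
    spanMatrix H V L R ε c d * MonoidAlgebra.single h 1 = spanMatrix H V L R ε c d := by
  simp only [spanMatrix, Finset.sum_mul, MonoidAlgebra.single_mul_single, mul_one]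
  exact Fintype.sum_equiv (Equiv.mulRight h) _ _ fun g =>
    congrArg (fun q => MonoidAlgebra.single (g * h) (_ * q)) (hfib g)

section SpanMatrixId

variable {S : Type*} [Groupoid S] {G : Type*} [CommGroup G] [Fintype G]

lemma spanMatrix_id (H : GFunctor S G) (c x : Pi0 S) :
    spanMatrix H H (𝟭 S) (𝟭 S) (fun _ => 1) c x =
      ∑ g, MonoidAlgebra.single g ((Nat.card (Aut x.out) : ℚ)⁻¹ *
        Nat.card {f : c.out ⟶ x.out // H.map f = g}) :=
  Finset.sum_congr rfl fun g _ => by rw [← gcard_twoEpsFibre_id]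

lemma spanMatrix_id_of_ne (H : GFunctor S G) {c x : Pi0 S} (h : c ≠ x) :
    spanMatrix H H (𝟭 S) (𝟭 S) (fun _ => 1) c x = 0 := by
  have : IsEmpty (c.out ⟶ x.out) :=
    ⟨fun f => h (Quotient.out_equiv_out.mp ⟨(Groupoid.isoEquivHom _ _).symm f⟩)⟩
  simp [spanMatrix_id]

lemma mul_spanMatrix_id_self [∀ a : S, Finite (a ⟶ a)] (H : GFunctor S G) (c : Pi0 S)
    (P : MonoidAlgebra ℚ G) (hP : ∀ f : c.out ⟶ c.out, P * MonoidAlgebra.single (H.map f) 1 = P) :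
    P * spanMatrix H H (𝟭 S) (𝟭 S) (fun _ => 1) c c = P := by
  have hAut : Nat.card (Aut c.out) = Nat.card (c.out ⟶ c.out) :=
    Nat.card_congr (Groupoid.isoEquivHom _ _)
  rw [spanMatrix_id, hAut]
  exact MonoidAlgebra.mul_sum_single_inv_natCard_fiber _ P hP

end SpanMatrixId

/-- For a `G`-span `(M,L,R,ε)` from `(S,H)` to `(T,V)` and the identity `G`-spans
`(id_S,e)_*`, `(id_T,e)_*` (apex `S` resp. `T`, both legs the identity, `ε ≡ e`),
the matrices satisfy `[(id_S,e)_*]·[M,ε] = [M,ε] = [M,ε]·[(id_T,e)_*]`, where the matrix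
product is `(AB)(c₁,c₂) = ∑_{d} B(d,c₂)·A(c₁,d)`. -/
theorem stmt8 {S T M : Type*} [Groupoid S] [Groupoid T] [Groupoid M]
    [Finite S] [∀ a b : S, Finite (a ⟶ b)]
    [Finite T] [∀ a b : T, Finite (a ⟶ b)]
    [Finite M] [∀ a b : M, Finite (a ⟶ b)]
    {G : Type*} [CommGroup G] [Fintype G]
    (H : GFunctor S G) (V : GFunctor T G)
    (L : M ⥤ S) (R : M ⥤ T) (ε : M → G)
    (hε : ∀ {a b : M} (m : a ⟶ b), ε b * H.map (L.map m) = V.map (R.map m) * ε a) :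
    (∀ (c : Pi0 S) (d : Pi0 T),
        ∑ᶠ x : Pi0 S,
            spanMatrix H V L R ε x d *
              spanMatrix H H (𝟭 S) (𝟭 S) (fun _ => (1 : G)) c x =
          spanMatrix H V L R ε c d) ∧
      ∀ (c : Pi0 S) (d : Pi0 T),
        ∑ᶠ x : Pi0 T,
            spanMatrix V V (𝟭 T) (𝟭 T) (fun _ => (1 : G)) x d *
              spanMatrix H V L R ε c x =
          spanMatrix H V L R ε c d := by
  refine ⟨fun c d => ?_, fun c d => ?_⟩
  · rw [finsum_eq_single _ c fun x hx => by rw [spanMatrix_id_of_ne H (Ne.symm hx), mul_zero]]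
    exact mul_spanMatrix_id_self H c _ fun f => spanMatrix_mul_single_of_gcard H V L R ε c d _
      fun g => gcard_twoEpsFibre_eq_mul_right L R H V ε (asIso f).symm g
  · rw [finsum_eq_single _ d fun x hx => by rw [spanMatrix_id_of_ne V hx, zero_mul], mul_comm]
    exact mul_spanMatrix_id_self V d _ fun f => spanMatrix_mul_single_of_gcard H V L R ε c d _
      fun g => (gcard_twoEpsFibre_eq_mul_left L R H V ε (asIso f) g).trans (by rw [mul_comm]; rfl)

end
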